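/- arXiv:math/0107199 — 3 statements merged into one kernel-verified Lean document; each statement's English description precedes it below -/
import Mathlib

section
/- The static hysteresis area equals 3/2: ∫_{-λ_c}^{λ_c} (X*₊(λ) - X*₋(λ)) dλ = 3/2, where for |λ| < λ_c, X*₋(λ) < X*₀(λ) < X*₊(λ) denote the three real roots of x - x³ + λ = 0. -/
open Set MeasureTheory Real

/-!
On `|λ| < λ_c` the largest root `X₊(λ)` inverts `x ↦ x³ - x` on the stable branch
`(1/√3, 2/√3)` and the smallest root `X₋(λ)` inverts it on `(-2/√3, -1/√3)`: the roots sum to `0`,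
which pushes the extreme ones past the critical points `±1/√3`. The one-dimensional change of
variables for an injective map, which asks nothing of `X₊` beyond being a left inverse, turns
`∫ X₊ dλ` into `∫ x (3x² - 1) dx = 3/4` over the upper branch, and likewise `∫ X₋ dλ = -3/4`.
-/

theorem integral_image_of_leftInvOn {s : Set ℝ} {f f' g : ℝ → ℝ} (hs : MeasurableSet s)
    (hf' : ∀ x ∈ s, HasDerivWithinAt f (f' x) s x) (hg : LeftInvOn g f s) :
    ∫ y in f '' s, g y = ∫ x in s, |f' x| * x := by
  rw [integral_image_eq_integral_abs_deriv_smul hs hf' hg.injOn]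
  exact setIntegral_congr_fun hs fun x hx => by rw [smul_eq_mul, hg hx]

theorem integrableOn_image_of_leftInvOn {s : Set ℝ} {f f' g : ℝ → ℝ} (hs : MeasurableSet s)
    (hf' : ∀ x ∈ s, HasDerivWithinAt f (f' x) s x) (hg : LeftInvOn g f s)
    (hint : IntegrableOn (fun x => |f' x| * x) s) : IntegrableOn g (f '' s) := by
  rw [integrableOn_image_iff_integrableOn_abs_deriv_smul hs hf' hg.injOn]
  exact hint.congr_fun (fun x hx => by rw [smul_eq_mul, hg hx]) hs

lemma hasDerivAt_cube_sub_self (x : ℝ) :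
    HasDerivAt (fun x : ℝ => x ^ 3 - x) (3 * x ^ 2 - 1) x := by
  simpa using (hasDerivAt_pow 3 x).fun_sub (hasDerivAt_id' x)

lemma integral_mul_cube_sub_self (a b : ℝ) :
    ∫ x in a..b, (3 * x ^ 2 - 1) * x = (b ^ 2 - a ^ 2) * (3 * (b ^ 2 + a ^ 2) / 4 - 1 / 2) := by
  have hpoly : (fun x : ℝ => (3 * x ^ 2 - 1) * x) = fun x => 3 * x ^ 3 - x := by ext; ring
  rw [hpoly, intervalIntegral.integral_sub (by apply Continuous.intervalIntegrable; fun_prop)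
      (by apply Continuous.intervalIntegrable; fun_prop),
    intervalIntegral.integral_const_mul, integral_pow, integral_id]
  ring

lemma integrableOn_and_integral_of_leftInvOn_cube_sub_self {g : ℝ → ℝ} {a b : ℝ} (hab : a ≤ b)
    (hcrit : ∀ x ∈ Ioo a b, 1 < 3 * x ^ 2) (hg : LeftInvOn g (fun x => x ^ 3 - x) (Ioo a b)) :
    IntegrableOn g ((fun x => x ^ 3 - x) '' Ioo a b) ∧
      ∫ y in (fun x => x ^ 3 - x) '' Ioo a b, g y =
        (b ^ 2 - a ^ 2) * (3 * (b ^ 2 + a ^ 2) / 4 - 1 / 2) := by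
  have hf' : ∀ x ∈ Ioo a b,
      HasDerivWithinAt (fun x : ℝ => x ^ 3 - x) (3 * x ^ 2 - 1) (Ioo a b) x :=
    fun x _ => (hasDerivAt_cube_sub_self x).hasDerivWithinAt
  have habs : EqOn (fun x : ℝ => |3 * x ^ 2 - 1| * x) (fun x => (3 * x ^ 2 - 1) * x) (Ioo a b) :=
    fun x hx => congrArg (· * x) (abs_of_pos (sub_pos.2 (hcrit x hx)))
  refine ⟨integrableOn_image_of_leftInvOn measurableSet_Ioo hf' hg ?_, ?_⟩
  · exact (Continuous.integrableOn_Icc (by fun_prop)).mono_set Ioo_subset_Icc_self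
  · rw [integral_image_of_leftInvOn measurableSet_Ioo hf' hg,
      setIntegral_congr_fun measurableSet_Ioo habs, ← integral_Ioc_eq_integral_Ioo,
      ← intervalIntegral.integral_of_le hab, integral_mul_cube_sub_self]

lemma one_div_sqrt_three_lt_abs_iff {x : ℝ} : 1 / √3 < |x| ↔ 1 < 3 * x ^ 2 := by
  rw [← sq_lt_sq₀ (by positivity) (abs_nonneg x), sq_abs, div_pow, sq_sqrt (by norm_num)]
  constructor <;> intro h <;> linarith

lemma sq_add_mul_add_sq_eq_one_of_cube_sub_self_eq {x y : ℝ} (hxy : x ≠ y)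
    (h : x ^ 3 - x = y ^ 3 - y) : x ^ 2 + x * y + y ^ 2 = 1 :=
  mul_left_cancel₀ (sub_ne_zero.2 hxy) (by linear_combination h)

def IsRootTriple (r₁ r₂ r₃ a : ℝ) : Prop :=
  r₁ < r₂ ∧ r₂ < r₃ ∧ r₁ ^ 3 - r₁ = a ∧ r₂ ^ 3 - r₂ = a ∧ r₃ ^ 3 - r₃ = a

lemma IsRootTriple.neg {r₁ r₂ r₃ a : ℝ} (h : IsRootTriple r₁ r₂ r₃ a) :
    IsRootTriple (-r₃) (-r₂) (-r₁) (-a) := by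
  obtain ⟨h₁₂, h₂₃, e₁, e₂, e₃⟩ := h
  exact ⟨neg_lt_neg h₂₃, neg_lt_neg h₁₂, by linear_combination -e₃, by linear_combination -e₂,
    by linear_combination -e₁⟩

lemma IsRootTriple.one_div_sqrt_three_lt {r₁ r₂ r₃ a : ℝ} (h : IsRootTriple r₁ r₂ r₃ a) :
    1 / √3 < r₃ := by
  obtain ⟨h₁₂, h₂₃, e₁, e₂, e₃⟩ := h
  have q₁₃ := sq_add_mul_add_sq_eq_one_of_cube_sub_self_eq (h₁₂.trans h₂₃).ne (e₁.trans e₃.symm)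
  have q₂₃ := sq_add_mul_add_sq_eq_one_of_cube_sub_self_eq h₂₃.ne (e₂.trans e₃.symm)
  have hsum : r₁ + r₂ + r₃ = 0 :=
    mul_left_cancel₀ (sub_ne_zero.2 h₁₂.ne) (by linear_combination q₁₃ - q₂₃)
  have hr₃ : 0 < r₃ := by linarith
  -- `1 = r₂² + r₂ r₃ + r₃² < 3 r₃²`, as `r₂ < r₃` and `r₂ + 2 r₃ > 0`
  have hcrit : 1 < 3 * r₃ ^ 2 := by
    nlinarith [mul_pos (sub_pos.2 h₂₃) (by linarith : 0 < r₂ + 2 * r₃)]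
  rwa [← one_div_sqrt_three_lt_abs_iff, abs_of_pos hr₃] at hcrit

lemma IsRootTriple.lt_neg_one_div_sqrt_three {r₁ r₂ r₃ a : ℝ} (h : IsRootTriple r₁ r₂ r₃ a) :
    r₁ < -(1 / √3) :=
  lt_neg.2 h.neg.one_div_sqrt_three_lt

lemma strictMonoOn_cube_sub_self {s : Set ℝ} (hs : Convex ℝ s)
    (h : ∀ x ∈ interior s, 1 / √3 < |x|) : StrictMonoOn (fun x : ℝ => x ^ 3 - x) s := by
  refine strictMonoOn_of_deriv_pos hs (by fun_prop) fun x hx => ?_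
  have := one_div_sqrt_three_lt_abs_iff.1 (h x hx)
  rw [(hasDerivAt_cube_sub_self x).deriv]
  linarith

lemma strictMonoOn_cube_sub_self_Ici : StrictMonoOn (fun x : ℝ => x ^ 3 - x) (Ici (1 / √3)) :=
  strictMonoOn_cube_sub_self (convex_Ici _) fun x hx => by
    rw [interior_Ici] at hx
    exact hx.out.trans_le (le_abs_self x)

lemma strictMonoOn_cube_sub_self_Iic :
    StrictMonoOn (fun x : ℝ => x ^ 3 - x) (Iic (-(1 / √3))) :=
  strictMonoOn_cube_sub_self (convex_Iic _) fun x hx => by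
    rw [interior_Iic] at hx
    exact (lt_neg.1 hx.out).trans_le (neg_le_abs x)

lemma image_cube_sub_self_Ioo_upper :
    (fun x : ℝ => x ^ 3 - x) '' Ioo (1 / √3) (2 / √3) = Ioo (-(2 / (3 * √3))) (2 / (3 * √3)) := by
  have h3 : √3 ^ 2 = 3 := sq_sqrt (by norm_num)
  rw [ContinuousOn.image_Ioo_of_strictMonoOn (by gcongr; norm_num) (by fun_prop)
    (strictMonoOn_cube_sub_self_Ici.mono Icc_subset_Ici_self)]
  congr 1 <;> field_simp <;> rw [h3] <;> norm_num

lemma image_cube_sub_self_Ioo_lower :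
    (fun x : ℝ => x ^ 3 - x) '' Ioo (-(2 / √3)) (-(1 / √3)) =
      Ioo (-(2 / (3 * √3))) (2 / (3 * √3)) := by
  have h3 : √3 ^ 2 = 3 := sq_sqrt (by norm_num)
  rw [ContinuousOn.image_Ioo_of_strictMonoOn (by gcongr; norm_num) (by fun_prop)
    (strictMonoOn_cube_sub_self_Iic.mono Icc_subset_Iic_self)]
  congr 1 <;> field_simp <;> rw [h3] <;> norm_num

lemma integrableOn_and_integral_of_leftInvOn_upper_branch {g : ℝ → ℝ}
    (hg : LeftInvOn g (fun x => x ^ 3 - x) (Ioo (1 / √3) (2 / √3))) :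
    IntegrableOn g (Ioo (-(2 / (3 * √3))) (2 / (3 * √3))) ∧
      ∫ y in Ioo (-(2 / (3 * √3))) (2 / (3 * √3)), g y = 3 / 4 := by
  have := integrableOn_and_integral_of_leftInvOn_cube_sub_self (by gcongr; norm_num)
    (fun x hx => one_div_sqrt_three_lt_abs_iff.1 (hx.1.trans_le (le_abs_self x))) hg
  rw [image_cube_sub_self_Ioo_upper] at this
  norm_num [div_pow] at this
  exact this

lemma integrableOn_and_integral_of_leftInvOn_lower_branch {g : ℝ → ℝ}
    (hg : LeftInvOn g (fun x => x ^ 3 - x) (Ioo (-(2 / √3)) (-(1 / √3)))) :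
    IntegrableOn g (Ioo (-(2 / (3 * √3))) (2 / (3 * √3))) ∧
      ∫ y in Ioo (-(2 / (3 * √3))) (2 / (3 * √3)), g y = -(3 / 4) := by
  have := integrableOn_and_integral_of_leftInvOn_cube_sub_self (by gcongr; norm_num)
    (fun x hx => one_div_sqrt_three_lt_abs_iff.1 ((lt_neg.1 hx.2).trans_le (neg_le_abs x))) hg
  rw [image_cube_sub_self_Ioo_lower] at this
  norm_num [div_pow] at this
  exact this

section Roots

variable {Xm X0 Xp : ℝ → ℝ}

lemma leftInvOn_largest_root (hroots : ∀ a ∈ Ioo (-(2 / (3 * √3))) (2 / (3 * √3)),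
      IsRootTriple (Xm a) (X0 a) (Xp a) a) :
    LeftInvOn Xp (fun x => x ^ 3 - x) (Ioo (1 / √3) (2 / √3)) := fun x hx => by
  have h := hroots _
    (image_cube_sub_self_Ioo_upper ▸ mem_image_of_mem (fun x : ℝ => x ^ 3 - x) hx)
  exact strictMonoOn_cube_sub_self_Ici.injOn h.one_div_sqrt_three_lt.le hx.1.le h.2.2.2.2

lemma leftInvOn_smallest_root (hroots : ∀ a ∈ Ioo (-(2 / (3 * √3))) (2 / (3 * √3)),
      IsRootTriple (Xm a) (X0 a) (Xp a) a) :
    LeftInvOn Xm (fun x => x ^ 3 - x) (Ioo (-(2 / √3)) (-(1 / √3))) := fun x hx => by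
  have h := hroots _
    (image_cube_sub_self_Ioo_lower ▸ mem_image_of_mem (fun x : ℝ => x ^ 3 - x) hx)
  exact strictMonoOn_cube_sub_self_Iic.injOn h.lt_neg_one_div_sqrt_three.le hx.2.le h.2.2.1

end Roots

/-- The static hysteresis area: if for each `|λ| < λ_c` the three real roots of
`x - x³ + λ = 0` are `Xm λ < X0 λ < Xp λ`, then `∫_{-λ_c}^{λ_c} (Xp - Xm) dλ = 3/2`. -/
theorem static_hysteresis_area
    (Xm X0 Xp : ℝ → ℝ)
    (hroots : ∀ lam : ℝ, |lam| < 2 / (3 * Real.sqrt 3) →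
      Xm lam < X0 lam ∧ X0 lam < Xp lam ∧
      Xm lam - (Xm lam) ^ 3 + lam = 0 ∧
      X0 lam - (X0 lam) ^ 3 + lam = 0 ∧
      Xp lam - (Xp lam) ^ 3 + lam = 0) :
    ∫ lam in (-(2 / (3 * Real.sqrt 3)))..(2 / (3 * Real.sqrt 3)),
      (Xp lam - Xm lam) = 3 / 2 := by
  have hroots' : ∀ a ∈ Ioo (-(2 / (3 * √3))) (2 / (3 * √3)),
      IsRootTriple (Xm a) (X0 a) (Xp a) a := fun a ha => by
    obtain ⟨h₁₂, h₂₃, e₁, e₂, e₃⟩ := hroots a (abs_lt.2 ha)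
    exact ⟨h₁₂, h₂₃, by linarith, by linarith, by linarith⟩
  obtain ⟨hp_int, hp⟩ :=
    integrableOn_and_integral_of_leftInvOn_upper_branch (leftInvOn_largest_root hroots')
  obtain ⟨hm_int, hm⟩ :=
    integrableOn_and_integral_of_leftInvOn_lower_branch (leftInvOn_smallest_root hroots')
  rw [intervalIntegral.integral_of_le (by simp only [neg_le_self_iff]; positivity),
    integral_Ioc_eq_integral_Ioo, integral_sub hp_int hm_int, hp, hm]
  norm_num
end

section
/- Let a : [t₀, t] → ℝ be continuous with a(s) ≤ -c < 0 on [t₀, t] and α(t,s) = ∫ₛᵗ a(u) du. Define ζ(t) = (1/(2|a(t₀)|)) e^{2α(t,t₀)/ε} + (1/ε) ∫_{t₀}^t e^{2α(t,s)/ε} ds. Then ζ(t) ≤ 1/(2c) + e^{-2c(t-t₀)/ε}/(2|a(t₀)|); in particular ζ(t) ≤ 1/(2c) + 1/(2|a(t₀)|). -/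
/-!
Since `a ≤ -c`, we have `α(t,s) ≤ -c (t - s)`, so every exponential in `ζ(t)` is dominated by
`e^{-2c(t-s)/ε}`. The dominating integral is explicit, `(ε/2c)(1 - e^{-2c(t-t₀)/ε})`, and the
boundary term is at most `e^{-2c(t-t₀)/ε}/(2|a(t₀)|)`; finally `e^{-2c(t-t₀)/ε} ≤ 1`.
-/

open Real Set intervalIntegral

theorem integral_le_const_mul_sub {f : ℝ → ℝ} {a b C : ℝ} (hab : a ≤ b)
    (hf : IntervalIntegrable f MeasureTheory.volume a b) (h : ∀ x ∈ Icc a b, f x ≤ C) :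
    ∫ x in a..b, f x ≤ C * (b - a) := by
  simpa [mul_comm] using integral_mono_on hab hf intervalIntegrable_const h

theorem integral_exp_neg_mul_sub {k : ℝ} (hk : k ≠ 0) (a b : ℝ) :
    ∫ s in a..b, exp (-k * (b - s)) = (1 - exp (-k * (b - a))) / k := by
  have hderiv : ∀ s ∈ uIcc a b,
      HasDerivAt (fun s => exp (-k * (b - s)) / k) (exp (-k * (b - s))) s := by
    intro s _
    have : HasDerivAt (fun s => exp (-k * (b - s)) / k) (exp (-k * (b - s)) * (-k * -1) / k) s :=
      ((((hasDerivAt_id' s).const_sub b).const_mul (-k)).exp).div_const k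
    convert this using 1
    field_simp
  rw [integral_eq_sub_of_hasDerivAt hderiv (Continuous.intervalIntegrable (by fun_prop) a b)]
  simp [sub_div]

section
variable {a : ℝ → ℝ} {t₀ t c : ℝ}

theorem exp_mul_integral_le {κ : ℝ} (hκ : 0 ≤ κ) (hcont : ContinuousOn a (Icc t₀ t))
    (hneg : ∀ s ∈ Icc t₀ t, a s ≤ -c) {s : ℝ} (hs : s ∈ Icc t₀ t) :
    exp (κ * ∫ u in s..t, a u) ≤ exp (-(κ * c) * (t - s)) := by
  have hα := integral_le_const_mul_sub hs.2
    ((hcont.mono (Icc_subset_Icc_left hs.1)).intervalIntegrable_of_Icc hs.2)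
    fun x hx => hneg x ⟨hs.1.trans hx.1, hx.2⟩
  gcongr exp ?_
  nlinarith

theorem integral_exp_mul_integral_le {κ : ℝ} (ht : t₀ ≤ t) (hκ : 0 < κ) (hc : 0 < c)
    (hcont : ContinuousOn a (Icc t₀ t)) (hneg : ∀ s ∈ Icc t₀ t, a s ≤ -c) :
    ∫ s in t₀..t, exp (κ * ∫ u in s..t, a u) ≤ (1 - exp (-(κ * c) * (t - t₀))) / (κ * c) := by
  have hprimitive : ContinuousOn (fun s => ∫ u in s..t, a u) (Icc t₀ t) := by
    rw [← uIcc_of_le ht] at hcont ⊢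
    exact continuousOn_primitive_interval_left hcont.integrableOn_uIcc
  rw [← integral_exp_neg_mul_sub (by positivity)]
  exact integral_mono_on ht
    ((continuous_exp.comp_continuousOn (hprimitive.const_smul κ)).intervalIntegrable_of_Icc ht)
    (Continuous.intervalIntegrable (by fun_prop) t₀ t)
    fun s hs => exp_mul_integral_le hκ.le hcont hneg hs

end

/-- Bound on the path-spreading function
`ζ(t) = e^{2α(t,t₀)/ε}/(2|a(t₀)|) + (1/ε)∫_{t₀}^t e^{2α(t,s)/ε} ds`
when `a ≤ -c < 0` on `[t₀, t]`. -/
theorem zeta_bound_stable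
    (a : ℝ → ℝ) (t₀ t c ε : ℝ)
    (ht : t₀ ≤ t) (hc : 0 < c) (hε : 0 < ε)
    (hcont : ContinuousOn a (Set.Icc t₀ t))
    (hneg : ∀ s ∈ Set.Icc t₀ t, a s ≤ -c) :
    (1 / (2 * |a t₀|)) * Real.exp (2 * (∫ u in t₀..t, a u) / ε)
      + (1 / ε) * ∫ s in t₀..t, Real.exp (2 * (∫ u in s..t, a u) / ε)
      ≤ 1 / (2 * c) + Real.exp (-2 * c * (t - t₀) / ε) / (2 * |a t₀|) ∧
    (1 / (2 * |a t₀|)) * Real.exp (2 * (∫ u in t₀..t, a u) / ε)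
      + (1 / ε) * ∫ s in t₀..t, Real.exp (2 * (∫ u in s..t, a u) / ε)
      ≤ 1 / (2 * c) + 1 / (2 * |a t₀|) := by
  have hE : exp (-2 * c * (t - t₀) / ε) = exp (-(2 / ε * c) * (t - t₀)) := by congr 1; ring
  set E := exp (-2 * c * (t - t₀) / ε)
  have hE_le_one : E ≤ 1 := exp_le_one_iff.mpr <|
    div_nonpos_of_nonpos_of_nonneg (by nlinarith) hε.le
  have ha₀ : 0 < |a t₀| := abs_pos_of_neg ((hneg t₀ ⟨le_rfl, ht⟩).trans_lt (neg_neg_of_pos hc))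
  simp_rw [mul_div_right_comm (2 : ℝ)]
  have hfirst : exp (2 / ε * ∫ u in t₀..t, a u) ≤ E :=
    hE ▸ exp_mul_integral_le (by positivity) hcont hneg ⟨le_rfl, ht⟩
  have hsecond : 1 / ε * ∫ s in t₀..t, exp (2 / ε * ∫ u in s..t, a u) ≤ (1 - E) / (2 * c) :=
    calc 1 / ε * ∫ s in t₀..t, exp (2 / ε * ∫ u in s..t, a u)
        ≤ 1 / ε * ((1 - E) / (2 / ε * c)) := by
          rw [hE]
          gcongr
          exact integral_exp_mul_integral_le ht (by positivity) hc hcont hneg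
      _ = (1 - E) / (2 * c) := by field_simp
  have hζ : 1 / (2 * |a t₀|) * exp (2 / ε * ∫ u in t₀..t, a u)
      + 1 / ε * ∫ s in t₀..t, exp (2 / ε * ∫ u in s..t, a u)
      ≤ 1 / (2 * c) + E / (2 * |a t₀|) := by
    have hboundary : 1 / (2 * |a t₀|) * exp (2 / ε * ∫ u in t₀..t, a u) ≤ E / (2 * |a t₀|) := by
      rw [one_div_mul_eq_div]; gcongr
    have hbulk : (1 - E) / (2 * c) ≤ 1 / (2 * c) := by gcongr; exact sub_le_self 1 (exp_pos _).le
    linarith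
  exact ⟨hζ, hζ.trans (by gcongr)⟩
end

section
/- Let a : [t₀, t₁] → ℝ be continuous with -c₂ ≤ a(s) ≤ -c₁ < 0, let α(t,s) = ∫ₛᵗ a(u) du, let λ' be continuous with |λ'| ≤ Λ on [t₀, t₁], and set g(t,s) = -∫ₛᵗ e^{α(u,s)/ε} λ'(u) du. Then |g(t,s)| ≤ (ε/c₁) Λ for all t₀ ≤ s ≤ t ≤ t₁, and consequently (1/ε²) ∫_{t₀}^{t} g(t,s)² ds ≤ Λ² (t - t₀)/c₁². -/
/-!
Since `a ≤ -c₁`, the weight `exp (α(u,s)/ε)` is at most `exp (-(c₁/ε)(u - s))`, whose integral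
over `[s, ∞)` is `ε/c₁`; with `|λ'| ≤ Λ` this gives `|g(t,s)| ≤ (ε/c₁) Λ`. Squaring and integrating
the uniform bound over `[t₀, t]` gives the bound on `Γ`.
-/

open Real Set MeasureTheory

lemma integral_exp_neg_mul_sub_le {k : ℝ} (hk : 0 < k) (s t : ℝ) :
    ∫ u in s..t, exp (-k * (u - s)) ≤ k⁻¹ := by
  calc ∫ u in s..t, exp (-k * (u - s)) = (1 - exp (-k * (t - s))) / k := by
        rw [intervalIntegral.integral_comp_sub_right (fun w => exp (-k * w)),
          intervalIntegral.integral_comp_mul_left exp (neg_ne_zero.2 hk.ne'), integral_exp]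
        simp only [sub_self, mul_zero, exp_zero, smul_eq_mul]
        field_simp
        ring
    _ ≤ 1 / k := by gcongr; exact sub_le_self _ (exp_pos _).le
    _ = k⁻¹ := one_div k

lemma intervalIntegral_le_mul_sub_of_le {a : ℝ → ℝ} {s u C : ℝ} (hsu : s ≤ u)
    (ha_int : IntervalIntegrable a volume s u) (ha : ∀ v ∈ Icc s u, a v ≤ C) :
    ∫ v in s..u, a v ≤ C * (u - s) := by
  simpa [mul_comm] using intervalIntegral.integral_mono_on hsu ha_int intervalIntegrable_const ha

lemma abs_intervalIntegral_le_of_abs_le_exp_decay {f : ℝ → ℝ} {s t k Λ : ℝ} (hk : 0 < k)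
    (hst : s ≤ t) (hf : ∀ u ∈ Icc s t, |f u| ≤ Λ * exp (-k * (u - s))) :
    |∫ u in s..t, f u| ≤ Λ / k := by
  have hΛ : 0 ≤ Λ := by
    simpa using (abs_nonneg _).trans (hf s (left_mem_Icc.2 hst))
  calc |∫ u in s..t, f u|
      ≤ ∫ u in s..t, Λ * exp (-k * (u - s)) :=
        intervalIntegral.norm_integral_le_of_norm_le hst
          (ae_of_all _ fun u hu => (norm_eq_abs _).trans_le (hf u (Ioc_subset_Icc_self hu)))
          (Continuous.intervalIntegrable (by fun_prop) s t)
    _ = Λ * ∫ u in s..t, exp (-k * (u - s)) := intervalIntegral.integral_const_mul _ _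
    _ ≤ Λ * k⁻¹ := mul_le_mul_of_nonneg_left (integral_exp_neg_mul_sub_le hk s t) hΛ
    _ = Λ / k := rfl

theorem abs_integral_exp_integral_div_mul_le {a l : ℝ → ℝ} {s t c ε Λ : ℝ} (hc : 0 < c)
    (hε : 0 < ε) (hst : s ≤ t) (ha_int : IntegrableOn a (Icc s t))
    (ha : ∀ v ∈ Icc s t, a v ≤ -c) (hl : ∀ u ∈ Icc s t, |l u| ≤ Λ) :
    |∫ u in s..t, exp ((∫ v in s..u, a v) / ε) * l u| ≤ ε / c * Λ := by
  have hdecay : ∀ u ∈ Icc s t,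
      |exp ((∫ v in s..u, a v) / ε) * l u| ≤ Λ * exp (-(c / ε) * (u - s)) := by
    intro u hu
    have hweight : exp ((∫ v in s..u, a v) / ε) ≤ exp (-(c / ε) * (u - s)) := by
      have hint : ∫ v in s..u, a v ≤ -c * (u - s) :=
        intervalIntegral_le_mul_sub_of_le hu.1
          ((intervalIntegrable_iff_integrableOn_Icc_of_le hu.1).2
            (ha_int.mono_set (Icc_subset_Icc_right hu.2)))
          fun v hv => ha v (Icc_subset_Icc_right hu.2 hv)
      rw [exp_le_exp, show -(c / ε) * (u - s) = -c * (u - s) / ε by ring]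
      exact div_le_div_of_nonneg_right hint hε.le
    rw [abs_mul, abs_of_pos (exp_pos _), mul_comm Λ]
    exact mul_le_mul hweight (hl u hu) (abs_nonneg _) (exp_pos _).le
  calc _ ≤ Λ / (c / ε) := abs_intervalIntegral_le_of_abs_le_exp_decay (div_pos hc hε) hst hdecay
    _ = ε / c * Λ := by field_simp

lemma intervalIntegral_sq_le_of_abs_le {g : ℝ → ℝ} {a b M : ℝ} (hab : a ≤ b)
    (hg : ∀ s ∈ Ioc a b, |g s| ≤ M) : ∫ s in a..b, g s ^ 2 ≤ M ^ 2 * (b - a) := by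
  have hsq : ∀ s ∈ uIoc a b, ‖g s ^ 2‖ ≤ M ^ 2 := fun s hs => by
    rw [uIoc_of_le hab] at hs
    rw [norm_pow, Real.norm_eq_abs]
    exact pow_le_pow_left₀ (abs_nonneg _) (hg s hs) 2
  simpa [abs_of_nonneg (sub_nonneg.2 hab)] using
    (le_abs_self _).trans (intervalIntegral.norm_integral_le_of_norm_le_const hsq)

theorem kernel_g_bound_general
    (a l : ℝ → ℝ) (t₀ t₁ c₁ c₂ Λ ε : ℝ)
    (hc₁ : 0 < c₁) (hε : 0 < ε)
    (ha_cont : ContinuousOn a (Set.Icc t₀ t₁))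
    (ha : ∀ s ∈ Set.Icc t₀ t₁, -c₂ ≤ a s ∧ a s ≤ -c₁)
    (hl : ∀ s ∈ Set.Icc t₀ t₁, |l s| ≤ Λ) :
    (∀ s t : ℝ, t₀ ≤ s → s ≤ t → t ≤ t₁ →
      |(-∫ u in s..t, Real.exp ((∫ v in s..u, a v) / ε) * l u)| ≤ (ε / c₁) * Λ) ∧
    (∀ t : ℝ, t₀ ≤ t → t ≤ t₁ →
      (1 / ε ^ 2) * ∫ s in t₀..t,
          (-∫ u in s..t, Real.exp ((∫ v in s..u, a v) / ε) * l u) ^ 2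
        ≤ Λ ^ 2 * (t - t₀) / c₁ ^ 2) := by
  have hg : ∀ s t : ℝ, t₀ ≤ s → s ≤ t → t ≤ t₁ →
      |(-∫ u in s..t, exp ((∫ v in s..u, a v) / ε) * l u)| ≤ ε / c₁ * Λ := by
    intro s t hs hst ht
    have hsub : Icc s t ⊆ Icc t₀ t₁ := Icc_subset_Icc hs ht
    rw [abs_neg]
    exact abs_integral_exp_integral_div_mul_le hc₁ hε hst (ha_cont.mono hsub).integrableOn_Icc
      (fun v hv => (ha v (hsub hv)).2) fun u hu => hl u (hsub hu)
  refine ⟨hg, fun t ht₀ ht₁ => ?_⟩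
  calc (1 / ε ^ 2) * ∫ s in t₀..t, (-∫ u in s..t, exp ((∫ v in s..u, a v) / ε) * l u) ^ 2
      ≤ (1 / ε ^ 2) * ((ε / c₁ * Λ) ^ 2 * (t - t₀)) := by
        gcongr
        exact intervalIntegral_sq_le_of_abs_le ht₀ fun s hs => hg s t hs.1.le hs.2 ht₁
    _ = Λ ^ 2 * (t - t₀) / c₁ ^ 2 := by field_simp

/-- Bound on the kernel `g(t,s) = -∫ₛᵗ e^{α(u,s)/ε} λ'(u) du` when
`-c₂ ≤ a ≤ -c₁ < 0` and `|λ'| ≤ Λ`, and the resulting bound on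
`Γ(t,t₀) = (1/ε²) ∫ g(t,s)² ds`. -/
theorem kernel_g_bound
    (a l : ℝ → ℝ) (t₀ t₁ c₁ c₂ Λ ε : ℝ)
    (hc₁ : 0 < c₁) (hε : 0 < ε) (ht : t₀ ≤ t₁)
    (ha_cont : ContinuousOn a (Set.Icc t₀ t₁))
    (ha : ∀ s ∈ Set.Icc t₀ t₁, -c₂ ≤ a s ∧ a s ≤ -c₁)
    (hl_cont : ContinuousOn l (Set.Icc t₀ t₁))
    (hl : ∀ s ∈ Set.Icc t₀ t₁, |l s| ≤ Λ) :
    (∀ s t : ℝ, t₀ ≤ s → s ≤ t → t ≤ t₁ →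
      |(-∫ u in s..t, Real.exp ((∫ v in s..u, a v) / ε) * l u)| ≤ (ε / c₁) * Λ) ∧
    (∀ t : ℝ, t₀ ≤ t → t ≤ t₁ →
      (1 / ε ^ 2) * ∫ s in t₀..t,
          (-∫ u in s..t, Real.exp ((∫ v in s..u, a v) / ε) * l u) ^ 2
        ≤ Λ ^ 2 * (t - t₀) / c₁ ^ 2) :=
  kernel_g_bound_general a l t₀ t₁ c₁ c₂ Λ ε hc₁ hε ha_cont ha hl
end
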